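/- For σ ∈ S_n let κ_σ be the unique element of I_n such that σ = (n,κ_σ(n))∘(n−1,κ_σ(n−1))∘⋯∘(1,κ_σ(1)), and set σ^{[i]} := (n,κ_σ(n))∘⋯∘(i,κ_σ(i)). Let ᾱ(σ) := ∏_g (n−2u−2+g)⁻¹ ∈ K, the product over all g ∈ {1,…,n} that are not the maximum of their cycle in σ. Then for arbitrary n×n matrices C_1,…,C_n over A, ⟨⟨C_1,…,C_n⟩⟩ = ∑_{σ∈S_n} ᾱ(σ)·P_{σ⁻¹}·C_1^(σ^{[1]}(1))·C_2^(σ^{[2]}(2))⋯C_n^(σ^{[n]}(n)). -/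

import Mathlib

/-!
STATEMENT 11: For σ ∈ S_n let κ_σ ∈ I_n be the unique tuple with
σ = (n,κ_σ(n))∘⋯∘(1,κ_σ(1)), σ^{[i]} := (n,κ_σ(n))∘⋯∘(i,κ_σ(i)), and
ᾱ(σ) := ∏_{g not max of its σ-cycle} (n−2u−2+g)⁻¹. Then
⟨⟨C_1,…,C_n⟩⟩ = ∑_{σ∈S_n} ᾱ(σ)·P_{σ⁻¹}·C_1^(σ^{[1]}(1))⋯C_n^(σ^{[n]}(n)).
κ_σ is formalized as any function `κσ` satisfying its defining property.
The point `i : Fin n` carries the label `i+1 ∈ {1,…,n}`.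
-/

noncomputable section

abbrev K : Type := RatFunc ℚ

def u : K := RatFunc.X

/-- Operators on the n-fold tensor power of K^n with coefficients in A. -/
abbrev Op (A : Type*) (n : ℕ) := Matrix (Fin n → Fin n) (Fin n → Fin n) A

variable {A : Type*} [Ring A] [Algebra K A] {n : ℕ}

/-- `act C s` = C^(s): the matrix C acting on the s-th tensor factor. -/
def act (C : Matrix (Fin n) (Fin n) A) (s : Fin n) : Op A n :=
  fun f g => if ∀ t, t ≠ s → f t = g t then C (f s) (g s) else 0

/-- `Pop σ` = P_σ: permutation of the tensor factors according to σ. -/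
def Pop (σ : Equiv.Perm (Fin n)) : Op A n :=
  fun f g => if f = g ∘ ⇑σ⁻¹ then (1 : A) else 0

/-- P_{ij} (with P_{ii} = Id). -/
def Pij (i j : Fin n) : Op A n := Pop (Equiv.swap i j)

/-- Π_k = 1 − (2u−k−n+2)⁻¹ ∑_{i=k+1}^n P_{ki}, with label k+1. -/
def Piop (k : Fin n) : Op A n :=
  (1 : Op A n) -
    ((2 * u - ((k : ℕ) + 1 : K) - (n : K) + 2)⁻¹ : K) •
      ∑ i ∈ Finset.univ.filter (fun i => k < i), Pij k i

/-- ⟨⟨C_1,…,C_n⟩⟩ = C_1^(1)·Π_1·C_2^(2)·Π_2⋯Π_{n−1}·C_n^(n). -/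
def braket (C : Fin n → Matrix (Fin n) (Fin n) A) : Op A n :=
  ((List.finRange n).map (fun s => act (C s) s * Piop s)).prod

/-- σ^{[i]} for σ with associated tuple κ: (n,κ(n))∘(n−1,κ(n−1))∘⋯∘(i,κ(i)). -/
def qk (κ : Fin n → Fin n) (i : Fin n) : Equiv.Perm (Fin n) :=
  ((((List.finRange n).filter (fun j => decide (i ≤ j))).reverse).map
    (fun j => Equiv.swap j (κ j))).prod

/-- The full product (n,κ(n))∘(n−1,κ(n−1))∘⋯∘(1,κ(1)). -/
def permOf (κ : Fin n → Fin n) : Equiv.Perm (Fin n) :=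
  (((List.finRange n).reverse).map (fun j => Equiv.swap j (κ j))).prod

/-- ᾱ(σ) = ∏ (n−2u−2+g)⁻¹ over all g that are not the maximum of their σ-cycle,
with label g+1. -/
def alphaBar (σ : Equiv.Perm (Fin n)) : K :=
  ∏ g ∈ Finset.univ.filter (fun g => ¬ ∀ j, σ.SameCycle g j → j ≤ g),
    ((n : K) - 2 * u - 2 + ((g : ℕ) + 1 : K))⁻¹

/-!
Write `Π_k = ∑_{j ≥ k} c_{kj} P_{kj}` with `c_{kk} = 1` and `c_{kj} = (n−2u−2+k)⁻¹` for `j > k`,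
and expand `⟨⟨C_1,…,C_n⟩⟩` from the right. A term is indexed by `κ ∈ I_n`; pushing each
`P_{kκ(k)}` to the left through the factors `C_s^(s)` (using `C^(s) P_ρ = P_ρ C^(ρ⁻¹ s)`)
leaves `P_{σ⁻¹}`, `σ = (n,κ(n))∘⋯∘(1,κ(1))`, in front of `C_1^(σ^{[1]}(1))⋯C_n^(σ^{[n]}(n))`, with
coefficient `∏_{κ(g) ≠ g} (n−2u−2+g)⁻¹`. This is `ᾱ(σ)`: in `σ^{[k]} = σ^{[k+1]}∘(k,κ(k))` the
point `k` is fixed by `σ^{[k+1]}`, so the transposition inserts `k` into the cycle of `κ(k) ≥ k`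
and changes no other cycle; hence `g` fails to be the maximum of its `σ`-cycle iff `κ(g) ≠ g`.
-/

open Equiv

namespace Equiv.Perm

section SameCycle

variable {α : Type*} [Finite α]

theorem SameCycle.map_of_forall_sameCycle_apply {β : Type*} {σ : Perm α} {τ : Perm β}
    (p : α → β) (hp : ∀ y, τ.SameCycle (p y) (p (σ y))) {a b : α} (hab : σ.SameCycle a b) :
    τ.SameCycle (p a) (p b) := by
  obtain ⟨i, -, rfl⟩ := hab.exists_pow_eq'
  clear hab
  induction i with
  | zero => rfl
  | succ i ih => exact ih.trans (by rw [pow_succ', mul_apply]; exact hp _)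

variable [DecidableEq α] {τ : Perm α} {k w : α}

theorem SameCycle.mul_swap (hk : τ k = k) {a b : α} (hab : τ.SameCycle a b) :
    (τ * swap k w).SameCycle a b := by
  refine hab.map_of_forall_sameCycle_apply id fun y => ?_
  by_cases hyw : y = w
  · have h2 : (τ * swap k w) ((τ * swap k w) w) = τ w := by simp [hk]
    rw [id, id, hyw, ← h2, sameCycle_apply_right, sameCycle_apply_right]
  · by_cases hyk : y = k
    · simp [hyk, hk, SameCycle.refl]
    · have h1 : (τ * swap k w) y = τ y := by simp [swap_apply_of_ne_of_ne hyk hyw]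
      rw [id, id, ← h1, sameCycle_apply_right]

theorem sameCycle_mul_swap_iff (hk : τ k = k) {a b : α} (ha : a ≠ k) (hb : b ≠ k) :
    (τ * swap k w).SameCycle a b ↔ τ.SameCycle a b := by
  refine ⟨fun h => ?_, SameCycle.mul_swap hk⟩
  -- Collapsing `k` onto `w` turns every step of `τ * swap k w` into a step of `τ` or no step.
  have key := h.map_of_forall_sameCycle_apply (τ := τ) (fun y => if y = k then w else y)
    fun y => ?_
  · simpa [ha, hb] using key
  have hne : ∀ {x}, x ≠ k → τ x ≠ k := fun hx h => hx (τ.injective (h.trans hk.symm))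
  by_cases hyk : y = k
  · by_cases hwk : w = k
    · simp [hyk, hwk, hk, SameCycle.refl]
    · simp [hyk, hne hwk, SameCycle.refl]
  · by_cases hyw : y = w
    · simp [hyw, hk, SameCycle.refl]
    · simp [hyk, swap_apply_of_ne_of_ne hyk hyw, hne hyk, SameCycle.refl]

end SameCycle

section IsCycleMax

variable {α : Type*} [LinearOrder α] {τ : Perm α} {k w g : α}

def IsCycleMax (σ : Perm α) (g : α) : Prop := ∀ j, σ.SameCycle g j → j ≤ g

theorem isCycleMax_of_apply_eq {σ : Perm α} (h : σ g = g) : σ.IsCycleMax g :=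
  fun _ hj => (hj.eq_of_left h).ge

theorem not_isCycleMax_mul_swap (hk : τ k = k) (hkw : k < w) :
    ¬ (τ * swap k w).IsCycleMax k := by
  intro h
  have hwk : (τ * swap k w).SameCycle w k := ⟨1, by simp [hk]⟩
  exact hkw.not_ge (h w hwk.symm)

theorem isCycleMax_mul_swap_iff [Finite α] (hk : τ k = k) (hkw : k ≤ w) (hg : g ≠ k) :
    (τ * swap k w).IsCycleMax g ↔ τ.IsCycleMax g := by
  refine ⟨fun h j hj => h j (hj.mul_swap hk), fun h j hj => ?_⟩
  by_cases hjk : j = k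
  · rw [hjk] at hj ⊢
    have hwk : (τ * swap k w) w = k := by simp [hk]
    have hgw : (τ * swap k w).SameCycle g w := by rwa [← sameCycle_apply_right, hwk]
    by_cases hw : w = k
    · exact absurd (hgw.eq_of_right (by rwa [hw] at hwk ⊢)) (hw ▸ hg)
    · exact hkw.trans (h w ((sameCycle_mul_swap_iff hk hg hw).1 hgw))
  · exact h j ((sameCycle_mul_swap_iff hk hg hjk).1 hj)

end IsCycleMax

end Equiv.Perm

section SwapProd

variable {α : Type*}

def swapProd [DecidableEq α] (κ : α → α) (l : List α) : Perm α :=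
  (l.reverse.map fun j => swap j (κ j)).prod

section DecidableEq
variable [DecidableEq α] {κ κ' : α → α} {l : List α}

@[simp] theorem swapProd_nil : swapProd κ [] = 1 := rfl

theorem swapProd_cons (j : α) (l : List α) :
    swapProd κ (j :: l) = swapProd κ l * swap j (κ j) := by
  simp [swapProd]

theorem swapProd_congr (h : ∀ j ∈ l, κ j = κ' j) : swapProd κ l = swapProd κ' l := by
  unfold swapProd
  congr 1
  exact List.map_congr_left fun j hj => by rw [h j (List.mem_reverse.1 hj)]

end DecidableEq

variable [LinearOrder α] {κ κ' : α → α} {l : List α} {s : α}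

theorem swapProd_apply_of_forall_lt (hκ : ∀ j ∈ l, j ≤ κ j) {a : α} (ha : ∀ j ∈ l, a < j) :
    swapProd κ l a = a := by
  induction l with
  | nil => rfl
  | cons j l ih =>
    simp only [List.forall_mem_cons] at hκ ha
    rw [swapProd_cons, Perm.mul_apply,
      swap_apply_of_ne_of_ne ha.1.ne (ha.1.trans_le hκ.1).ne, ih hκ.2 ha.2]

theorem swapProd_cons_inv_apply_self (hκ : ∀ j ∈ l, j ≤ κ j) (hs : ∀ j ∈ l, s < j) :
    (swapProd κ (s :: l))⁻¹ s = κ s := by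
  rw [swapProd_cons, mul_inv_rev, Perm.mul_apply, Perm.inv_eq_iff_eq.2
    (swapProd_apply_of_forall_lt hκ hs).symm, swap_inv, swap_apply_left]

theorem eqOn_of_swapProd_eq (hl : l.Pairwise (· < ·)) (hκ : ∀ j ∈ l, j ≤ κ j)
    (hκ' : ∀ j ∈ l, j ≤ κ' j) (h : swapProd κ l = swapProd κ' l) : ∀ j ∈ l, κ j = κ' j := by
  induction hl with
  | nil => simp
  | @cons s l hs hl ih =>
    simp only [List.forall_mem_cons] at hκ hκ' ⊢
    have hs' : κ s = κ' s := by
      rw [← swapProd_cons_inv_apply_self hκ.2 hs, h, swapProd_cons_inv_apply_self hκ'.2 hs]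
    refine ⟨hs', ih hκ.2 hκ'.2 ?_⟩
    simpa [swapProd_cons, hs'] using h

theorem isCycleMax_swapProd_iff [Finite α] (hl : l.Pairwise (· < ·)) (hκ : ∀ j ∈ l, j ≤ κ j)
    (g : α) : (swapProd κ l).IsCycleMax g ↔ (g ∈ l → κ g = g) := by
  induction hl generalizing g with
  | nil => simpa using Perm.isCycleMax_of_apply_eq rfl
  | @cons s l hs hl ih =>
    simp only [List.forall_mem_cons] at hκ
    have hfix : swapProd κ l s = s := swapProd_apply_of_forall_lt hκ.2 hs
    rw [swapProd_cons]
    by_cases hg : g = s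
    · subst hg
      rcases hκ.1.eq_or_lt with hgκ | hgκ
      · simpa [← hgκ] using Perm.isCycleMax_of_apply_eq (by simpa using hfix)
      · simpa [hgκ.ne'] using Perm.not_isCycleMax_mul_swap hfix hgκ
    · simp [Perm.isCycleMax_mul_swap_iff hfix hκ.1 hg, ih hκ.2, hg]

end SwapProd

section ProdMoved

open Finset Function

variable {α M : Type*} [Fintype α] [DecidableEq α] [CommMonoid M] (c : α → M)

def prodMoved (κ : α → α) : M :=
  ∏ g ∈ univ.filter (fun g => κ g ≠ g), c g

theorem prodMoved_id : prodMoved c id = 1 := by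
  simp [prodMoved]

theorem prodMoved_update {κ : α → α} {s : α} (hκ : κ s = s) (j : α) :
    prodMoved c (update κ s j) = (if j = s then 1 else c s) * prodMoved c κ := by
  by_cases hj : j = s
  · rw [if_pos hj, one_mul, update_eq_self_iff.2 (hj.trans hκ.symm)]
  · have hmoved : univ.filter (fun g => update κ s j g ≠ g) =
        insert s (univ.filter fun g => κ g ≠ g) := by
      ext g
      by_cases hg : g = s <;> simp [hg, hj, hκ, update_of_ne]
    rw [prodMoved, prodMoved, hmoved, prod_insert (by simp [hκ]), if_neg hj]

end ProdMoved

section Tuples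

open Finset Function

variable {α : Type*} [Fintype α] [LinearOrder α]

def tuplesOn (l : List α) : Finset (α → α) :=
  univ.filter fun κ => ∀ i, (i ∈ l → i ≤ κ i) ∧ (i ∉ l → κ i = i)

theorem mem_tuplesOn {l : List α} {κ : α → α} :
    κ ∈ tuplesOn l ↔ ∀ i, (i ∈ l → i ≤ κ i) ∧ (i ∉ l → κ i = i) := by
  simp [tuplesOn]

theorem tuplesOn_nil : tuplesOn ([] : List α) = {id} := by
  ext κ
  simp [tuplesOn, funext_iff]

theorem sum_tuplesOn_cons {M : Type*} [AddCommMonoid M] {s : α} {l : List α} (hs : s ∉ l)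
    (F : (α → α) → M) :
    ∑ κ ∈ tuplesOn (s :: l), F κ =
      ∑ j ∈ univ.filter (s ≤ ·), ∑ κ ∈ tuplesOn l, F (update κ s j) := by
  rw [← sum_product']
  symm
  refine sum_nbij' (fun p => update p.2 s p.1) (fun κ => (κ s, update κ s s)) ?_ ?_ ?_ ?_
    (fun _ _ => rfl)
  · rintro ⟨j, κ⟩ hp
    simp only [mem_product, mem_filter, mem_univ, true_and, mem_tuplesOn] at hp ⊢
    intro i
    by_cases hi : i = s
    · subst hi; simp [hp.1]
    · simpa [hi] using hp.2 i
  · intro κ hκ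
    simp only [mem_product, mem_filter, mem_univ, true_and, mem_tuplesOn] at hκ ⊢
    refine ⟨by simpa using (hκ s).1, fun i => ?_⟩
    by_cases hi : i = s
    · subst hi; simp [hs]
    · simpa [hi] using hκ i
  · rintro ⟨j, κ⟩ hp
    simp only [mem_product, mem_filter, mem_univ, true_and, mem_tuplesOn] at hp
    have hκs : update κ s s = κ := update_eq_self_iff.2 ((hp.2 s).2 hs).symm
    simp only [update_self, update_idem, hκs]
  · intro κ _
    simp

end Tuples

section Operators

variable {R : Type*} [Ring R]

theorem pop_mul_eq_submatrix (σ : Perm (Fin n)) (M : Op R n) :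
    Pop σ * M = M.submatrix (· ∘ σ) id := by
  ext f g
  simp [Matrix.mul_apply, Pop, Equiv.eq_comp_symm, eq_comm]

theorem mul_pop_eq_submatrix (σ : Perm (Fin n)) (M : Op R n) :
    M * Pop σ = M.submatrix id (· ∘ ⇑σ⁻¹) := by
  ext f g
  simp [Matrix.mul_apply, Pop]

theorem pop_one : (Pop 1 : Op R n) = 1 := by
  ext f g
  simp [Pop, Matrix.one_apply]

theorem pop_mul (σ τ : Perm (Fin n)) : (Pop σ * Pop τ : Op R n) = Pop (σ * τ) := by
  ext f g
  simp [mul_pop_eq_submatrix, Pop, _root_.mul_inv_rev, Function.comp_assoc]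

theorem act_mul_pop (C : Matrix (Fin n) (Fin n) R) (s : Fin n) (σ : Perm (Fin n)) :
    act C s * Pop σ = Pop σ * act C (σ⁻¹ s) := by
  ext f g
  simp only [mul_pop_eq_submatrix, pop_mul_eq_submatrix, Matrix.submatrix_apply, act, id,
    Function.comp_apply]
  rw [show σ (σ⁻¹ s) = s from σ.apply_symm_apply s]
  refine if_congr ?_ rfl rfl
  rw [Equiv.forall_congr_left σ.symm]
  simp [← Equiv.eq_symm_apply]

theorem act_mul_pij_mul_pop_inv (C : Matrix (Fin n) (Fin n) R) (s j : Fin n)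
    (ρ : Perm (Fin n)) :
    act C s * Pij s j * Pop ρ⁻¹ = Pop (ρ * swap s j)⁻¹ * act C ((ρ * swap s j) s) := by
  have h : swap s j * ρ⁻¹ = (ρ * swap s j)⁻¹ := by rw [_root_.mul_inv_rev, swap_inv]
  rw [Pij, mul_assoc, pop_mul, act_mul_pop, h, inv_inv]

def tailProd (C : Fin n → Matrix (Fin n) (Fin n) R) (κ : Fin n → Fin n) (l : List (Fin n)) :
    Op R n :=
  (l.map fun s => act (C s) (swapProd κ (l.filter (s ≤ ·)) s)).prod

theorem tailProd_cons (C : Fin n → Matrix (Fin n) (Fin n) R) (κ : Fin n → Fin n) {s : Fin n}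
    {l : List (Fin n)} (hs : ∀ t ∈ l, s < t) :
    tailProd C κ (s :: l) = act (C s) (swapProd κ (s :: l) s) * tailProd C κ l := by
  have hself : (s :: l).filter (s ≤ ·) = s :: l :=
    List.filter_eq_self.2 fun t ht => by
      rcases List.mem_cons.1 ht with rfl | ht
      · simp
      · simpa using (hs t ht).le
  have htail : ∀ t ∈ l, (s :: l).filter (t ≤ ·) = l.filter (t ≤ ·) := fun t ht => by
    simp [(hs t ht).not_ge]
  rw [tailProd, List.map_cons, List.prod_cons, hself, tailProd]
  congr 2
  exact List.map_congr_left fun t ht => by rw [htail t ht]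

theorem tailProd_congr (C : Fin n → Matrix (Fin n) (Fin n) R) {κ κ' : Fin n → Fin n}
    {l : List (Fin n)} (h : ∀ j ∈ l, κ j = κ' j) : tailProd C κ l = tailProd C κ' l := by
  unfold tailProd
  congr 1
  exact List.map_congr_left fun t _ => by
    rw [swapProd_congr fun j hj => h j (List.mem_filter.1 hj).1]

theorem tailProd_finRange (C : Fin n → Matrix (Fin n) (Fin n) R) (κ : Fin n → Fin n) :
    tailProd C κ (List.finRange n) =
      ((List.finRange n).map fun s => act (C s) (qk κ s s)).prod := rfl

end Operators

def alphaFactor (g : Fin n) : K := ((n : K) - 2 * u - 2 + ((g : ℕ) + 1 : K))⁻¹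

theorem piop_eq_sum (k : Fin n) :
    (Piop k : Op A n) =
      ∑ j ∈ Finset.univ.filter (k ≤ ·), (if j = k then 1 else alphaFactor k) • Pij k j := by
  have hsplit : Finset.univ.filter (k ≤ ·) = insert k (Finset.univ.filter (k < ·)) := by
    ext j
    simp [le_iff_lt_or_eq, or_comm, eq_comm]
  have hneg : alphaFactor k = -(2 * u - ((k : ℕ) + 1 : K) - (n : K) + 2)⁻¹ := by
    rw [alphaFactor, ← inv_neg]
    ring_nf
  rw [hsplit, Finset.sum_insert (by simp), if_pos rfl, one_smul, Pij, swap_self, ← Perm.one_def,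
    pop_one, Finset.sum_congr rfl fun j hj => by rw [if_neg (Finset.mem_filter.1 hj).2.ne'],
    ← Finset.smul_sum, hneg, neg_smul, ← sub_eq_add_neg, Piop]

open Finset in
theorem prod_act_mul_piop_eq_sum (C : Fin n → Matrix (Fin n) (Fin n) A) {l : List (Fin n)}
    (hl : l.Pairwise (· < ·)) :
    (l.map fun s => act (C s) s * Piop s).prod =
      ∑ κ ∈ tuplesOn l, prodMoved alphaFactor κ • (Pop (swapProd κ l)⁻¹ * tailProd C κ l) := by
  induction hl with
  | nil => simp [tuplesOn_nil, prodMoved_id, pop_one, tailProd]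
  | @cons s l hs hl ih =>
    have hsl : s ∉ l := fun h => (hs s h).false
    rw [List.map_cons, List.prod_cons, ih, piop_eq_sum, mul_assoc, sum_mul_sum,
      sum_tuplesOn_cons hsl, mul_sum]
    refine sum_congr rfl fun j _ => ?_
    rw [mul_sum]
    refine sum_congr rfl fun κ hκ => ?_
    have hκs : κ s = s := (mem_tuplesOn.1 hκ s).2 hsl
    have hupd : ∀ t ∈ l, Function.update κ s j t = κ t := fun t ht =>
      Function.update_of_ne (hs t ht).ne' _ _
    rw [prodMoved_update _ hκs, tailProd_cons C _ hs, swapProd_cons, swapProd_congr hupd,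
      tailProd_congr C hupd, Function.update_self]
    simp only [smul_mul_assoc, mul_smul_comm, smul_smul, ← mul_assoc, act_mul_pij_mul_pop_inv]
    rw [mul_comm (prodMoved alphaFactor κ)]

theorem permOf_eq_swapProd (κ : Fin n → Fin n) : permOf κ = swapProd κ (List.finRange n) := rfl

theorem mem_tuplesOn_finRange {κ : Fin n → Fin n} :
    κ ∈ tuplesOn (List.finRange n) ↔ ∀ i, i ≤ κ i := by
  simp [mem_tuplesOn]

theorem permOf_injOn {κ κ' : Fin n → Fin n} (hκ : ∀ i, i ≤ κ i) (hκ' : ∀ i, i ≤ κ' i)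
    (h : permOf κ = permOf κ') : κ = κ' :=
  funext fun i => eqOn_of_swapProd_eq (List.pairwise_lt_finRange n) (fun j _ => hκ j)
    (fun j _ => hκ' j) h i (List.mem_finRange i)

theorem prodMoved_alphaFactor_eq_alphaBar {κ : Fin n → Fin n} (hκ : ∀ i, i ≤ κ i) :
    prodMoved alphaFactor κ = alphaBar (permOf κ) := by
  refine Finset.prod_congr (Finset.filter_congr fun g _ => ?_) fun _ _ => rfl
  rw [← not_iff_not, not_not, ← Perm.IsCycleMax, permOf_eq_swapProd,
    isCycleMax_swapProd_iff (List.pairwise_lt_finRange n) (fun i _ => hκ i)]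
  simp

theorem braket_eq_sum_perm_general (C : Fin n → Matrix (Fin n) (Fin n) A)
    (κσ : Equiv.Perm (Fin n) → (Fin n → Fin n))
    (hκσ : ∀ σ : Equiv.Perm (Fin n), (∀ i, i ≤ κσ σ i) ∧ σ = permOf (κσ σ)) :
    braket C =
      ∑ σ : Equiv.Perm (Fin n), alphaBar σ •
        (Pop σ⁻¹ *
          ((List.finRange n).map (fun s => act (C s) (qk (κσ σ) s s))).prod) := by
  have hκσ_permOf : ∀ κ : Fin n → Fin n, (∀ i, i ≤ κ i) → κσ (permOf κ) = κ := fun κ hκ =>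
    permOf_injOn (hκσ _).1 hκ (hκσ _).2.symm
  rw [braket, prod_act_mul_piop_eq_sum C (List.pairwise_lt_finRange n)]
  refine Finset.sum_nbij' permOf κσ (by simp) (fun σ _ => mem_tuplesOn_finRange.2 (hκσ σ).1)
    (fun κ hκ => hκσ_permOf κ (mem_tuplesOn_finRange.1 hκ)) (fun σ _ => (hκσ σ).2.symm)
    fun κ hκ => ?_
  have hκ := mem_tuplesOn_finRange.1 hκ
  rw [hκσ_permOf κ hκ, prodMoved_alphaFactor_eq_alphaBar hκ, tailProd_finRange,
    ← permOf_eq_swapProd]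

theorem braket_eq_sum_perm (hn : 1 ≤ n) (C : Fin n → Matrix (Fin n) (Fin n) A)
    (κσ : Equiv.Perm (Fin n) → (Fin n → Fin n))
    (hκσ : ∀ σ : Equiv.Perm (Fin n), (∀ i, i ≤ κσ σ i) ∧ σ = permOf (κσ σ)) :
    braket C =
      ∑ σ : Equiv.Perm (Fin n), alphaBar σ •
        (Pop σ⁻¹ *
          ((List.finRange n).map (fun s => act (C s) (qk (κσ σ) s s))).prod) :=
  braket_eq_sum_perm_general C κσ hκσ
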